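/- Let n ≥ 2. There exists an optimal Hermitian LCD quaternary [n, 2] code C such that the minimum weight of the Hermitian dual code C^{⊥h} equals 1 if and only if n ≡ 4 (mod 5). -/
import Mathlib


open Finset

/-- The finite field with four elements. -/
abbrev F4 : Type := GaloisField 2 2

noncomputable instance : Fintype F4 := Fintype.ofFinite F4

lemma F4.card_eq : Fintype.card F4 = 4 := by
  simpa using GaloisField.card 2 2 (by norm_num)

lemma F4.exists_omega : ∃ x : F4, x ^ 2 + x + 1 = 0 := by
  classical
  obtain ⟨x, hx0, hx1⟩ : ∃ x : F4, x ≠ 0 ∧ x ≠ 1 := by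
    by_contra h
    push_neg at h
    have hsub : (Finset.univ : Finset F4) ⊆ {0, 1} := by
      intro x _
      rcases eq_or_ne x 0 with h0 | h0
      · simp [h0]
      · simp [h x h0]
    have h1 := Finset.card_le_card hsub
    have h2 : ({0, 1} : Finset F4).card ≤ 2 := (Finset.card_insert_le _ _).trans (by simp)
    have h3 : (Finset.univ : Finset F4).card = 4 := F4.card_eq
    omega
  refine ⟨x, ?_⟩
  have hx : x ^ Fintype.card F4 = x := FiniteField.pow_card x
  rw [F4.card_eq] at hx
  have hmul : x * (x - 1) * (x ^ 2 + x + 1) = 0 := by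
    have : x * (x - 1) * (x ^ 2 + x + 1) = x ^ 4 - x := by ring
    rw [this, hx, sub_self]
  rcases mul_eq_zero.mp hmul with h | h
  · rcases mul_eq_zero.mp h with h | h
    · exact absurd h hx0
    · exact absurd (sub_eq_zero.mp h) hx1
  · exact h

/-- A fixed root of `X² + X + 1` in `F₄`. -/
noncomputable def ω4 : F4 := Classical.choose F4.exists_omega

lemma ω4_spec : ω4 ^ 2 + ω4 + 1 = 0 := Classical.choose_spec F4.exists_omega

open scoped Classical in
/-- Hamming weight of a vector. -/
noncomputable def wt {n : ℕ} (x : Fin n → F4) : ℕ :=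
  (Finset.univ.filter fun i => x i ≠ 0).card

/-- `C` is a code with minimum (nonzero) weight `d`. -/
noncomputable def hasMinWeight {n : ℕ} (C : Submodule F4 (Fin n → F4)) (d : ℕ) : Prop :=
  (∀ x ∈ C, x ≠ 0 → d ≤ wt x) ∧ ∃ x ∈ C, x ≠ 0 ∧ wt x = d

/-- The Hermitian inner product on `F₄ⁿ`; the conjugate of `x` is `x²`. -/
noncomputable def hermInner {n : ℕ} (u v : Fin n → F4) : F4 := ∑ i, u i * (v i) ^ 2

/-- The Hermitian dual code. -/
noncomputable def hermDual {n : ℕ} (C : Submodule F4 (Fin n → F4)) : Submodule F4 (Fin n → F4) where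
  carrier := {x | ∀ y ∈ C, hermInner x y = 0}
  zero_mem' := by intro y hy; simp [hermInner]
  add_mem' := by
    intro a b ha hb y hy
    have := ha y hy
    have := hb y hy
    simp only [hermInner, Pi.add_apply, add_mul, Finset.sum_add_distrib] at *
    simp [*]
  smul_mem' := by
    intro c a ha y hy
    have h := ha y hy
    simp only [hermInner, Pi.smul_apply, smul_eq_mul, mul_assoc, ← Finset.mul_sum] at *
    simp [h]

/-- `C` is a Hermitian linear complementary dual code. -/
noncomputable def IsHermLCD {n : ℕ} (C : Submodule F4 (Fin n → F4)) : Prop :=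
  C ⊓ hermDual C = ⊥

/-- The monomial linear map given by a permutation of coordinates followed by a
multiplication of each coordinate by a scalar. -/
noncomputable def monoMap {n : ℕ} (σ : Equiv.Perm (Fin n)) (s : Fin n → F4) :
    (Fin n → F4) →ₗ[F4] (Fin n → F4) where
  toFun x := fun i => s i * x (σ i)
  map_add' a b := by funext i; simp [mul_add]
  map_smul' c a := by funext i; simp [smul_eq_mul]; ring

/-- Two codes are equivalent if one is obtained from the other by a permutation of the
coordinates and multiplication of coordinates by nonzero scalars. -/
noncomputable def codeEquiv {n : ℕ} (C C' : Submodule F4 (Fin n → F4)) : Prop :=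
  ∃ (σ : Equiv.Perm (Fin n)) (s : Fin n → F4),
    (∀ i, s i ≠ 0) ∧ Submodule.map (monoMap σ s) C = C'

/-- First row of the generator matrix `G(a₁, a₂, a₃, a₄, a₅)`. -/
noncomputable def row1 (n a₁ : ℕ) : Fin n → F4 := fun i =>
  if i.val = 0 then 1
  else if i.val < 2 + a₁ then 0
  else 1

/-- Second row of the generator matrix `G(a₁, a₂, a₃, a₄, a₅)`. -/
noncomputable def row2 (n a₁ a₂ a₃ a₄ : ℕ) : Fin n → F4 := fun i =>
  if i.val = 0 then 0
  else if i.val < 2 + a₁ then 1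
  else if i.val < 2 + a₁ + a₂ then 0
  else if i.val < 2 + a₁ + a₂ + a₃ then 1
  else if i.val < 2 + a₁ + a₂ + a₃ + a₄ then ω4
  else ω4 ^ 2

set_option linter.unusedVariables false in
/-- The code `C(a₁, a₂, a₃, a₄, a₅)`, of length `n = 2 + a₁ + a₂ + a₃ + a₄ + a₅`:
the span of the rows of the generator matrix `G(a₁, a₂, a₃, a₄, a₅)` whose columns are
`(1,0)ᵀ`, `(0,1)ᵀ`, `a₁` columns `(0,1)ᵀ`, `a₂` columns `(1,0)ᵀ`, `a₃` columns `(1,1)ᵀ`,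
`a₄` columns `(1,ω)ᵀ` and `a₅` columns `(1,ω²)ᵀ`. -/
noncomputable def Ccode (n a₁ a₂ a₃ a₄ a₅ : ℕ) : Submodule F4 (Fin n → F4) :=
  Submodule.span F4 {row1 n a₁, row2 n a₁ a₂ a₃ a₄}

/-- The largest minimum weight among Hermitian LCD `[n,2]` codes. -/
def optimalDist (n : ℕ) : ℕ :=
  if n % 5 = 1 ∨ n % 5 = 2 ∨ n % 5 = 3 then 4 * n / 5 else 4 * n / 5 - 1

/-- `C` is an optimal Hermitian LCD `[n, 2, d]` code. -/
noncomputable def IsOptimalLCD (n d : ℕ) (C : Submodule F4 (Fin n → F4)) : Prop :=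
  Module.finrank F4 C = 2 ∧ hasMinWeight C d ∧ IsHermLCD C ∧ d = optimalDist n

/-- The linear map appending a zero coordinate: `x ↦ (x, 0)`. -/
noncomputable def extendZero (m : ℕ) : (Fin m → F4) →ₗ[F4] (Fin (m + 1) → F4) where
  toFun x := Fin.snoc x 0
  map_add' a b := by
    funext i
    refine Fin.lastCases ?_ ?_ i <;> simp
  map_smul' c a := by
    funext i
    refine Fin.lastCases ?_ ?_ i <;> simp

section F4facts

lemma F4.two0 : (2 : F4) = 0 := by
  have := CharP.cast_eq_zero F4 2
  simpa using this

lemma F4.addself (a : F4) : a + a = 0 := by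
  have h : (2:F4) * a = 0 := by rw [F4.two0]; ring
  linear_combination h

lemma F4.addeq {a b : F4} (h : a + b = 0) : a = b := by
  linear_combination h - F4.addself b

lemma F4.pow4 (a : F4) : a ^ 4 = a := by
  have := FiniteField.pow_card a
  rwa [F4.card_eq] at this

lemma ω4_sq : ω4 ^ 2 = ω4 + 1 := by
  linear_combination ω4_spec - (ω4+1) * F4.two0

lemma ω4_cube : ω4 ^ 3 = 1 := by
  linear_combination (ω4 - 1) * ω4_spec

lemma ω4_ne_zero : ω4 ≠ 0 := by
  intro h
  have := ω4_spec
  rw [h] at this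
  simp at this

lemma ω4_ne_one : ω4 ≠ 1 := by
  intro h
  have h2 := ω4_spec
  rw [h] at h2
  have h3 : (1:F4) = 0 := by linear_combination h2 - F4.two0
  simp at h3

lemma F4.cases (x : F4) : x = 0 ∨ x = 1 ∨ x = ω4 ∨ x = ω4 ^ 2 := by
  have hpow := F4.pow4 x
  have key : x * (x + 1) * ((x + ω4) * (x + ω4 ^ 2)) = 0 := by
    linear_combination hpow + (x^3 + x^2*ω4 + x*(ω4+1)) * ω4_spec
      - (ω4*(ω4+1)*x) * F4.two0
  rcases mul_eq_zero.mp key with h | h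
  · rcases mul_eq_zero.mp h with h | h
    · exact Or.inl h
    · exact Or.inr (Or.inl (by linear_combination h - F4.addself 1))
  · rcases mul_eq_zero.mp h with h | h
    · exact Or.inr (Or.inr (Or.inl (by linear_combination h - F4.addself ω4)))
    · exact Or.inr (Or.inr (Or.inr (by linear_combination h - F4.addself (ω4^2))))

lemma F4.cube {a : F4} (h : a ≠ 0) : a * a ^ 2 = 1 := by
  have h4 := F4.pow4 a
  have : a * (a * a ^ 2 - 1) = 0 := by linear_combination h4
  rcases mul_eq_zero.mp this with h' | h'
  · exact absurd h' h
  · linear_combination h'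

lemma F4.sq_eq_zero {a : F4} (h : a ^ 2 = 0) : a = 0 := by
  exact pow_eq_zero_iff (by norm_num) |>.mp h

end F4facts

section HermWt

variable {n : ℕ}

lemma hermInner_add_left (u v w : Fin n → F4) :
    hermInner (u + v) w = hermInner u w + hermInner v w := by
  simp [hermInner, add_mul, Finset.sum_add_distrib]

lemma hermInner_smul_left (c : F4) (u w : Fin n → F4) :
    hermInner (c • u) w = c * hermInner u w := by
  simp [hermInner, Finset.mul_sum, mul_assoc]

lemma hermInner_add_right (u v w : Fin n → F4) :
    hermInner u (v + w) = hermInner u v + hermInner u w := by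
  simp only [hermInner, Pi.add_apply]
  rw [← Finset.sum_add_distrib]
  apply Finset.sum_congr rfl
  intro i _
  have hsq : (v i + w i) ^ 2 = v i ^ 2 + w i ^ 2 := by
    linear_combination (v i * w i) * F4.two0
  rw [hsq]; ring

lemma hermInner_smul_right (c : F4) (u v : Fin n → F4) :
    hermInner u (c • v) = c ^ 2 * hermInner u v := by
  simp only [hermInner, Pi.smul_apply, smul_eq_mul, mul_pow, Finset.mul_sum]
  apply Finset.sum_congr rfl
  intro i _
  ring

lemma hermInner_swap (u v : Fin n → F4) : hermInner v u = hermInner u v ^ 2 := by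
  have h := map_sum (frobenius F4 2) (fun i => u i * v i ^ 2) Finset.univ
  simp only [frobenius_def] at h
  rw [hermInner, hermInner, h]
  apply Finset.sum_congr rfl
  intro i _
  have h4 : (v i ^ 2) ^ 2 = v i := by
    have := F4.pow4 (v i); linear_combination this
  calc v i * u i ^ 2 = u i ^ 2 * ((v i ^2)^2) := by rw [h4]; ring
  _ = (u i * v i ^ 2) ^ 2 := by ring

open scoped Classical in
lemma wt_eq_sum (x : Fin n → F4) :
    wt x = ∑ i, (if x i ≠ 0 then 1 else 0) := by
  rw [wt, Finset.card_filter]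

open scoped Classical in
lemma hermInner_self (x : Fin n → F4) : hermInner x x = (wt x : F4) := by
  rw [wt_eq_sum, hermInner]
  push_cast
  apply Finset.sum_congr rfl
  intro i _
  by_cases h : x i = 0
  · simp [h]
  · rw [if_pos h, F4.cube h]

lemma wt_pos {x : Fin n → F4} (h : x ≠ 0) : 1 ≤ wt x := by
  classical
  rw [wt]
  rw [Nat.one_le_iff_ne_zero, Ne, Finset.card_eq_zero, Finset.filter_eq_empty_iff]
  intro hall
  apply h
  funext i
  have := hall (Finset.mem_univ i)
  simpa using this

lemma wt_smul {c : F4} (hc : c ≠ 0) (x : Fin n → F4) : wt (c • x) = wt x := by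
  classical
  rw [wt, wt]
  congr 1
  apply Finset.filter_congr
  intro i _
  simp [hc]

lemma card_filter_fin (p : ℕ → Prop) [DecidablePred p] :
    ((Finset.univ : Finset (Fin n)).filter (fun i => p i.val)).card
      = ((Finset.range n).filter p).card := by
  apply Finset.card_bij (fun i _ => i.val)
  · intro a ha
    simp only [Finset.mem_filter, Finset.mem_range]
    simp only [Finset.mem_filter] at ha
    exact ⟨a.isLt, ha.2⟩
  · intro a _ b _ h
    exact Fin.val_injective h
  · intro b hb
    simp only [Finset.mem_filter, Finset.mem_range] at hb
    exact ⟨⟨b, hb.1⟩, by simp [hb.2], rfl⟩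

lemma wt_eq_of_iff (x : Fin n → F4) (p : ℕ → Prop) [DecidablePred p]
    (h : ∀ i : Fin n, x i ≠ 0 ↔ p i.val) :
    wt x = ((Finset.range n).filter p).card := by
  classical
  rw [wt, ← card_filter_fin p]
  congr 1
  apply Finset.filter_congr
  intro i _
  exact h i

lemma range_filter_Ico (a b : ℕ) (hb : b ≤ n) :
    ((Finset.range n).filter (fun m => a ≤ m ∧ m < b)).card = b - a := by
  have : (Finset.range n).filter (fun m => a ≤ m ∧ m < b) = Finset.Ico a b := by
    ext m
    simp only [Finset.mem_filter, Finset.mem_range, Finset.mem_Ico]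
    omega
  rw [this, Nat.card_Ico]

lemma range_filter_two (a b c d : ℕ) (h1 : b ≤ c) (h2 : d ≤ n) (h3 : b ≤ n) :
    ((Finset.range n).filter (fun m => (a ≤ m ∧ m < b) ∨ (c ≤ m ∧ m < d))).card
      = (b - a) + (d - c) := by
  have : (Finset.range n).filter (fun m => (a ≤ m ∧ m < b) ∨ (c ≤ m ∧ m < d))
      = Finset.Ico a b ∪ Finset.Ico c d := by
    ext m
    simp only [Finset.mem_filter, Finset.mem_range, Finset.mem_union, Finset.mem_Ico]
    omega
  rw [this, Finset.card_union_of_disjoint, Nat.card_Ico, Nat.card_Ico]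
  rw [Finset.disjoint_left]
  intro m hm hm'
  simp only [Finset.mem_Ico] at hm hm'
  omega

open scoped Classical in
lemma wt_add_zeros (x : Fin n → F4) :
    wt x + ((Finset.univ : Finset (Fin n)).filter (fun i => x i = 0)).card = n := by
  have hss : (Finset.univ.filter (fun i : Fin n => x i ≠ 0))
      = Finset.univ \ (Finset.univ.filter (fun i => x i = 0)) := by
    ext i; simp
  have hle : ((Finset.univ : Finset (Fin n)).filter (fun i => x i = 0)).card ≤ n := by
    refine le_trans (Finset.card_filter_le _ _) (by simp)
  rw [wt, hss, Finset.card_sdiff_of_subset (Finset.filter_subset _ _)]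
  simp only [Finset.card_univ, Fintype.card_fin]
  omega

end HermWt

section Tools

variable {n : ℕ}

lemma exists_zero (a b : F4) :
    a = 0 ∨ b = 0 ∨ a + b = 0 ∨ a + ω4 * b = 0 ∨ a + ω4 ^ 2 * b = 0 := by
  rcases F4.cases a with rfl | rfl | rfl | rfl
  · exact Or.inl rfl
  · rcases F4.cases b with rfl | rfl | rfl | rfl
    · exact Or.inr (Or.inl rfl)
    · exact Or.inr (Or.inr (Or.inl (F4.addself 1)))
    · exact Or.inr (Or.inr (Or.inr (Or.inr (by linear_combination ω4_cube + F4.two0))))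
    · exact Or.inr (Or.inr (Or.inr (Or.inl (by linear_combination ω4_cube + F4.two0))))
  · rcases F4.cases b with rfl | rfl | rfl | rfl
    · exact Or.inr (Or.inl rfl)
    · exact Or.inr (Or.inr (Or.inr (Or.inl (by linear_combination F4.addself ω4))))
    · exact Or.inr (Or.inr (Or.inl (F4.addself ω4)))
    · exact Or.inr (Or.inr (Or.inr (Or.inr
        (by linear_combination F4.pow4 ω4 + ω4 * F4.two0))))
  · rcases F4.cases b with rfl | rfl | rfl | rfl
    · exact Or.inr (Or.inl rfl)
    · exact Or.inr (Or.inr (Or.inr (Or.inr (by linear_combination F4.addself (ω4^2)))))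
    · exact Or.inr (Or.inr (Or.inr (Or.inl (by linear_combination F4.addself (ω4^2)))))
    · exact Or.inr (Or.inr (Or.inl (F4.addself (ω4^2))))

open scoped Classical in
lemma five_wt_bound (g1 g2 : Fin n → F4) (i0 : Fin n) (h1 : g1 i0 = 0) (h2 : g2 i0 = 0) :
    wt g1 + wt g2 + wt (g1 + g2) + wt (g1 + ω4 • g2) + wt (g1 + ω4 ^ 2 • g2)
      ≤ 4 * (n - 1) := by
  have key : ∀ i : Fin n,
      ((if g1 i ≠ 0 then 1 else 0) + (if g2 i ≠ 0 then 1 else 0)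
        + (if (g1 + g2) i ≠ 0 then 1 else 0)
        + (if (g1 + ω4 • g2) i ≠ 0 then 1 else 0)
        + (if (g1 + ω4 ^ 2 • g2) i ≠ 0 then 1 else 0))
      ≤ (if i = i0 then 0 else 4) := by
    intro i
    by_cases hi : i = i0
    · subst hi
      simp [h1, h2]
    · rw [if_neg hi]
      simp only [Pi.add_apply, Pi.smul_apply, smul_eq_mul]
      rcases exists_zero (g1 i) (g2 i) with h | h | h | h | h <;>
        simp only [h, ne_eq, not_true_eq_false, if_false, not_not] <;>
        split_ifs <;> omega
  have hsum : wt g1 + wt g2 + wt (g1 + g2) + wt (g1 + ω4 • g2) + wt (g1 + ω4 ^ 2 • g2)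
      = ∑ i : Fin n, ((if g1 i ≠ 0 then 1 else 0) + (if g2 i ≠ 0 then 1 else 0)
        + (if (g1 + g2) i ≠ 0 then 1 else 0)
        + (if (g1 + ω4 • g2) i ≠ 0 then 1 else 0)
        + (if (g1 + ω4 ^ 2 • g2) i ≠ 0 then 1 else 0)) := by
    simp only [Finset.sum_add_distrib]
    rw [wt_eq_sum, wt_eq_sum, wt_eq_sum, wt_eq_sum, wt_eq_sum]
  rw [hsum]
  calc _ ≤ ∑ i : Fin n, (if i = i0 then 0 else 4) := Finset.sum_le_sum (fun i _ => key i)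
  _ = 4 * (n - 1) := by
    rw [Finset.sum_ite, Finset.sum_const, Finset.sum_const]
    rw [Finset.filter_ne', Finset.card_erase_of_mem (Finset.mem_univ i0)]
    simp [Finset.card_univ, mul_comm]

lemma natCast_F4 (m : ℕ) : (m : F4) = if m % 2 = 0 then 0 else 1 := by
  induction m with
  | zero => simp
  | succ k ih =>
    push_cast
    rw [ih]
    by_cases hk : k % 2 = 0
    · rw [if_pos hk, if_neg (by omega)]
      ring
    · rw [if_neg hk, if_pos (by omega)]
      linear_combination F4.two0

lemma natCast_F4_zero {m : ℕ} (h : m % 2 = 0) : (m : F4) = 0 := by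
  rw [natCast_F4, if_pos h]

lemma natCast_F4_one {m : ℕ} (h : m % 2 = 1) : (m : F4) = 1 := by
  rw [natCast_F4, if_neg (by omega)]

lemma natCast_F4_eq_zero_iff (m : ℕ) : (m : F4) = 0 ↔ m % 2 = 0 := by
  rw [natCast_F4]
  split_ifs with h
  · simp [h]
  · simpa using h

lemma exists_basis_pair (C : Submodule F4 (Fin n → F4)) (hC : Module.finrank F4 C = 2) :
    ∃ g1 g2 : Fin n → F4, Submodule.span F4 {g1, g2} = C ∧
      ∀ x y : F4, x • g1 + y • g2 = 0 → x = 0 ∧ y = 0 := by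
  have : FiniteDimensional F4 C := inferInstance
  let b := (Module.finBasis F4 C).reindex (finCongr hC)
  refine ⟨(b 0 : Fin n → F4), (b 1 : Fin n → F4), ?_, ?_⟩
  · have h1 : Submodule.span F4 (Set.range (C.subtype ∘ b)) = C := by
      rw [Set.range_comp, ← Submodule.map_span, b.span_eq, Submodule.map_top,
        Submodule.range_subtype]
    have h2 : Set.range (C.subtype ∘ b) = {(b 0 : Fin n → F4), (b 1 : Fin n → F4)} := by
      ext v
      constructor
      · rintro ⟨i, rfl⟩
        fin_cases i
        · exact Or.inl rfl
        · exact Or.inr rfl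
      · rintro (rfl | rfl)
        · exact ⟨0, rfl⟩
        · exact ⟨1, rfl⟩
    rw [← h2, h1]
  · intro x y hxy
    have li : LinearIndependent F4 (C.subtype ∘ b) :=
      b.linearIndependent.map' C.subtype (Submodule.ker_subtype C)
    have := Fintype.linearIndependent_iff.mp li ![x, y] ?_
    · exact ⟨this 0, this 1⟩
    · rw [Fin.sum_univ_two]
      simpa using hxy

end Tools

section Solve

lemma omega_pows : ω4 ^ 2 + ω4 = 1 ∧ ω4 ^ 4 = ω4 ∧ ω4 * ω4 ^ 2 = 1 := by
  refine ⟨by linear_combination ω4_spec - F4.two0, F4.pow4 ω4,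
    by linear_combination ω4_cube⟩


lemma solve_s0 {s : F4} (h3 : s + s ^ 2 = 0) (h4 : ω4 ^ 2 * s + ω4 * s ^ 2 = 0) :
    s = 0 := by
  rcases F4.cases s with rfl | rfl | rfl | rfl
  · rfl
  · exact absurd (by linear_combination h4 - omega_pows.1 : (1:F4) = 0) one_ne_zero
  · exact absurd (by linear_combination h3 - omega_pows.1 : (1:F4) = 0) one_ne_zero
  · exact absurd (by linear_combination h3 - omega_pows.1 - omega_pows.2.1 : (1:F4) = 0)
      one_ne_zero

lemma solve_s1 {s : F4} (h3 : s + s ^ 2 = 0) (h4 : ω4 ^ 2 * s + ω4 * s ^ 2 = 1) :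
    s = 1 := by
  rcases F4.cases s with rfl | rfl | rfl | rfl
  · exact absurd (by linear_combination - h4 : (1:F4) = 0) one_ne_zero
  · rfl
  · exact absurd (by linear_combination - h4 + 2 * ω4_cube + F4.two0 : (1:F4) = 0) one_ne_zero
  · exact absurd (by linear_combination h3 - omega_pows.1 - omega_pows.2.1 : (1:F4) = 0)
      one_ne_zero

lemma solve_sw {s : F4} (h3 : s + s ^ 2 = 1) (h4 : ω4 ^ 2 * s + ω4 * s ^ 2 = 0) :
    s = ω4 := by
  rcases F4.cases s with rfl | rfl | rfl | rfl
  · exact absurd (by linear_combination - h3 : (1:F4) = 0) one_ne_zero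
  · exact absurd (by linear_combination F4.two0 - h3 : (1:F4) = 0) one_ne_zero
  · rfl
  · exact absurd
      (by linear_combination h4 - (1 + ω4) * omega_pows.2.1 - omega_pows.1 : (1:F4) = 0)
      one_ne_zero

lemma solve_sw2 {s : F4} (h3 : s + s ^ 2 = 1) (h4 : ω4 ^ 2 * s + ω4 * s ^ 2 = 1) :
    s = ω4 ^ 2 := by
  rcases F4.cases s with rfl | rfl | rfl | rfl
  · exact absurd (by linear_combination - h3 : (1:F4) = 0) one_ne_zero
  · exact absurd (by linear_combination F4.two0 - h3 : (1:F4) = 0) one_ne_zero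
  · exact absurd (by linear_combination - h4 + 2 * ω4_cube + F4.two0 : (1:F4) = 0) one_ne_zero
  · rfl

end Solve

section Gram

variable {n : ℕ}

lemma hermInner_expand (u v : Fin n → F4) (x y a b : F4) :
    hermInner (x • u + y • v) (a • u + b • v)
      = x * a ^ 2 * hermInner u u + x * b ^ 2 * hermInner u v
        + y * a ^ 2 * hermInner v u + y * b ^ 2 * hermInner v v := by
  simp only [hermInner_add_left, hermInner_add_right, hermInner_smul_left,
    hermInner_smul_right]
  ring

lemma not_lcd_witness {C : Submodule F4 (Fin n → F4)} {g1 g2 : Fin n → F4}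
    (hspan : Submodule.span F4 {g1, g2} = C) (x y : F4)
    (hne : x • g1 + y • g2 ≠ 0)
    (ho1 : x * hermInner g1 g1 + y * hermInner g2 g1 = 0)
    (ho2 : x * hermInner g1 g2 + y * hermInner g2 g2 = 0)
    (hlcd : IsHermLCD C) : False := by
  have hcC : x • g1 + y • g2 ∈ C := by
    rw [← hspan]; exact Submodule.mem_span_pair.mpr ⟨x, y, rfl⟩
  have hdual : x • g1 + y • g2 ∈ hermDual C := by
    intro z hz
    rw [← hspan] at hz
    obtain ⟨a, b, rfl⟩ := Submodule.mem_span_pair.mp hz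
    rw [hermInner_expand]
    linear_combination a ^ 2 * ho1 + b ^ 2 * ho2
  have hbot : x • g1 + y • g2 ∈ (⊥ : Submodule F4 (Fin n → F4)) := by
    rw [← hlcd]
    exact Submodule.mem_inf.mpr ⟨hcC, hdual⟩
  rw [Submodule.mem_bot] at hbot
  exact hne hbot

set_option maxHeartbeats 2000000 in
lemma forward_dir (n : ℕ) (hn : 2 ≤ n) (C : Submodule F4 (Fin n → F4)) (d : ℕ)
    (hrk : Module.finrank F4 C = 2) (hmin : hasMinWeight C d) (hlcd : IsHermLCD C)
    (hd : d = optimalDist n) (hdw : hasMinWeight (hermDual C) 1) : n % 5 = 4 := by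
  classical
  obtain ⟨g1, g2, hspan, hind⟩ := exists_basis_pair C hrk
  -- memberships
  have hg1 : g1 ∈ C := by rw [← hspan]; exact Submodule.subset_span (by simp)
  have hg2 : g2 ∈ C := by rw [← hspan]; exact Submodule.subset_span (by simp)
  have hc3 : g1 + g2 ∈ C := Submodule.add_mem C hg1 hg2
  have hc4 : g1 + ω4 • g2 ∈ C := Submodule.add_mem C hg1 (Submodule.smul_mem C _ hg2)
  have hc5 : g1 + ω4 ^ 2 • g2 ∈ C := Submodule.add_mem C hg1 (Submodule.smul_mem C _ hg2)
  -- nonzeroness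
  have hg1ne : g1 ≠ 0 := by
    intro h
    exact one_ne_zero (hind 1 0 (by simp [h])).1
  have hg2ne : g2 ≠ 0 := by
    intro h
    exact one_ne_zero (hind 0 1 (by simp [h])).2
  have hc3ne : g1 + g2 ≠ 0 := by
    intro h
    exact one_ne_zero (hind 1 1 (by simpa using h)).1
  have hc4ne : g1 + ω4 • g2 ≠ 0 := by
    intro h
    exact one_ne_zero (hind 1 ω4 (by simpa using h)).1
  have hc5ne : g1 + ω4 ^ 2 • g2 ≠ 0 := by
    intro h
    exact one_ne_zero (hind 1 (ω4 ^ 2) (by simpa using h)).1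
  -- the zero coordinate
  obtain ⟨u, huD, hune, huwt⟩ := hdw.2
  rw [wt] at huwt
  obtain ⟨i0, hi0⟩ := Finset.card_eq_one.mp huwt
  have humem : ∀ j : Fin n, u j ≠ 0 ↔ j = i0 := by
    intro j
    constructor
    · intro hj
      have : j ∈ Finset.univ.filter (fun i => u i ≠ 0) := by
        simp [hj]
      rw [hi0] at this
      simpa using this
    · intro hj
      subst hj
      have : j ∈ ({j} : Finset (Fin n)) := Finset.mem_singleton_self j
      rw [← hi0] at this
      simpa using this
  have zi : ∀ y ∈ C, y i0 = 0 := by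
    intro y hy
    have h0 : hermInner u y = 0 := huD y hy
    rw [hermInner] at h0
    rw [Finset.sum_eq_single i0 (fun j _ hj => by
      rw [of_not_not (fun h => hj ((humem j).mp h))]; ring) (by simp)] at h0
    have hu0 : u i0 ≠ 0 := (humem i0).mpr rfl
    have : y i0 ^ 2 = 0 := by
      rcases mul_eq_zero.mp h0 with h | h
      · exact absurd h hu0
      · exact h
    exact F4.sq_eq_zero this
  -- weights
  have hle1 := hmin.1 g1 hg1 hg1ne
  have hle2 := hmin.1 g2 hg2 hg2ne
  have hle3 := hmin.1 _ hc3 hc3ne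
  have hle4 := hmin.1 _ hc4 hc4ne
  have hle5 := hmin.1 _ hc5 hc5ne
  have hsum := five_wt_bound g1 g2 i0 (zi g1 hg1) (zi g2 hg2)
  -- some weight equals d
  have hex : wt g1 = d ∨ wt g2 = d ∨ wt (g1 + g2) = d ∨ wt (g1 + ω4 • g2) = d
      ∨ wt (g1 + ω4 ^ 2 • g2) = d := by
    obtain ⟨x, hxC, hxne, hxwt⟩ := hmin.2
    rw [← hspan] at hxC
    obtain ⟨a, b, rfl⟩ := Submodule.mem_span_pair.mp hxC
    by_cases ha : a = 0
    · subst ha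
      have hb : b ≠ 0 := by
        intro hb; subst hb; simp at hxne
      rw [zero_smul, zero_add, wt_smul hb] at hxwt
      exact Or.inr (Or.inl hxwt)
    · have hrw : a • g1 + b • g2 = a • (g1 + (a⁻¹ * b) • g2) := by
        rw [smul_add, smul_smul, mul_inv_cancel_left₀ ha]
      rw [hrw, wt_smul ha] at hxwt
      rcases F4.cases (a⁻¹ * b) with h | h | h | h <;> rw [h] at hxwt
      · rw [zero_smul, add_zero] at hxwt
        exact Or.inl hxwt
      · rw [one_smul] at hxwt
        exact Or.inr (Or.inr (Or.inl hxwt))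
      · exact Or.inr (Or.inr (Or.inr (Or.inl hxwt)))
      · exact Or.inr (Or.inr (Or.inr (Or.inr hxwt)))
  -- Gram identities
  have A1 : hermInner g1 g1 = (wt g1 : F4) := hermInner_self g1
  have A2 : hermInner g2 g2 = (wt g2 : F4) := hermInner_self g2
  have hswap : hermInner g2 g1 = hermInner g1 g2 ^ 2 := hermInner_swap g1 g2
  set s : F4 := hermInner g1 g2 with hs
  have A3 : (wt (g1 + g2) : F4) = hermInner g1 g1 + hermInner g2 g2 + s + s ^ 2 := by
    have h := hermInner_self (g1 + g2)
    have e := hermInner_expand g1 g2 1 1 1 1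
    simp only [one_smul] at e
    rw [e] at h
    linear_combination - h + hswap
  have A4 : (wt (g1 + ω4 • g2) : F4)
      = hermInner g1 g1 + hermInner g2 g2 + ω4 ^ 2 * s + ω4 * s ^ 2 := by
    have h := hermInner_self (g1 + ω4 • g2)
    have e := hermInner_expand g1 g2 1 ω4 1 ω4
    simp only [one_smul] at e
    rw [e] at h
    linear_combination - h + ω4 * hswap + (hermInner g2 g2) * ω4_cube
  have A5 : (wt (g1 + ω4 ^ 2 • g2) : F4)
      = hermInner g1 g1 + hermInner g2 g2 + ω4 * s + ω4 ^ 2 * s ^ 2 := by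
    have h := hermInner_self (g1 + ω4 ^ 2 • g2)
    have e := hermInner_expand g1 g2 1 (ω4 ^ 2) 1 (ω4 ^ 2)
    simp only [one_smul] at e
    rw [e] at h
    linear_combination - h + ω4 ^ 2 * hswap + (hermInner g2 g2) * (ω4 ^ 3 + 1) * ω4_cube
      + s * ω4 * ω4_cube
  -- parity of the sum of the five weights
  have hparF : ((wt g1 + wt g2 + wt (g1 + g2) + wt (g1 + ω4 • g2)
      + wt (g1 + ω4 ^ 2 • g2) : ℕ) : F4) = 0 := by
    push_cast
    linear_combination (- A1) - A2 + A3 + A4 + A5 + (s + s ^ 2) * ω4_spec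
      + (2 * hermInner g1 g1 + 2 * hermInner g2 g2) * F4.two0
  have hpar : (wt g1 + wt g2 + wt (g1 + g2) + wt (g1 + ω4 • g2)
      + wt (g1 + ω4 ^ 2 • g2)) % 2 = 0 := (natCast_F4_eq_zero_iff _).mp hparF
  -- generalize the five weights so that `omega` works on atoms
  set w1 := wt g1 with hw1
  set w2 := wt g2 with hw2
  set w3 := wt (g1 + g2) with hw3
  set w4 := wt (g1 + ω4 • g2) with hw4
  set w5 := wt (g1 + ω4 ^ 2 • g2) with hw5
  clear_value w1 w2 w3 w4 w5
  clear hw1 hw2 hw3 hw4 hw5 hex humem zi hi0 huwt hune huD u hparF hg1 hg2 hc3 hc4 hc5 hmin hdw hrk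
  -- case analysis on n % 5
  have h5 : n % 5 = 0 ∨ n % 5 = 1 ∨ n % 5 = 2 ∨ n % 5 = 3 ∨ n % 5 = 4 := by omega
  rcases h5 with h | h | h | h | h
  · -- n % 5 = 0 : impossible
    exfalso
    rw [optimalDist, if_neg (by omega)] at hd
    have hdn : 5 * d + 5 = 4 * n ∧ d % 2 = 1 := by omega
    obtain ⟨hdn5, hdodd⟩ := hdn
    have hS : w1 + w2 + w3 + w4 + w5 = 5 * d + 1 := by omega
    have hsplit :
        (w1 = d + 1 ∧ w2 = d ∧ w3 = d ∧ w4 = d ∧ w5 = d)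
      ∨ (w1 = d ∧ w2 = d + 1 ∧ w3 = d ∧ w4 = d ∧ w5 = d)
      ∨ (w1 = d ∧ w2 = d ∧ w3 = d + 1 ∧ w4 = d ∧ w5 = d)
      ∨ (w1 = d ∧ w2 = d ∧ w3 = d ∧ w4 = d + 1 ∧ w5 = d)
      ∨ (w1 = d ∧ w2 = d ∧ w3 = d ∧ w4 = d ∧ w5 = d + 1) := by
      clear hsum hpar hd hdn5 hn h
      omega
    rcases hsplit with ⟨e1, e2, e3, e4, e5⟩ | ⟨e1, e2, e3, e4, e5⟩ | ⟨e1, e2, e3, e4, e5⟩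
      | ⟨e1, e2, e3, e4, e5⟩ | ⟨e1, e2, e3, e4, e5⟩
    · -- wt g1 = d + 1
      have H0 : hermInner g1 g1 = 0 := by rw [A1, e1]; exact natCast_F4_zero (by omega)
      have K1 : hermInner g2 g2 = 1 := by rw [A2, e2]; exact natCast_F4_one (by omega)
      have h3c : ((w3 : ℕ) : F4) = 1 := by rw [e3]; exact natCast_F4_one (by omega)
      have h4c : ((w4 : ℕ) : F4) = 1 := by
        rw [e4]; exact natCast_F4_one (by omega)
      have E3 : s + s ^ 2 = 0 := by linear_combination - A3 + h3c - H0 - K1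
      have E4 : ω4 ^ 2 * s + ω4 * s ^ 2 = 0 := by linear_combination - A4 + h4c - H0 - K1
      have hs0 : s = 0 := solve_s0 E3 E4
      exact not_lcd_witness hspan 1 0 (by simpa using hg1ne)
        (by linear_combination H0) (by linear_combination hs0) hlcd
    · -- wt g2 = d + 1
      have H1 : hermInner g1 g1 = 1 := by rw [A1, e1]; exact natCast_F4_one (by omega)
      have K0 : hermInner g2 g2 = 0 := by rw [A2, e2]; exact natCast_F4_zero (by omega)
      have h3c : ((w3 : ℕ) : F4) = 1 := by rw [e3]; exact natCast_F4_one (by omega)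
      have h4c : ((w4 : ℕ) : F4) = 1 := by
        rw [e4]; exact natCast_F4_one (by omega)
      have E3 : s + s ^ 2 = 0 := by linear_combination - A3 + h3c - H1 - K0
      have E4 : ω4 ^ 2 * s + ω4 * s ^ 2 = 0 := by linear_combination - A4 + h4c - H1 - K0
      have hs0 : s = 0 := solve_s0 E3 E4
      refine not_lcd_witness hspan 0 1 (by simpa using hg2ne) ?_ ?_ hlcd
      · rw [hswap]
        linear_combination s * hs0
      · linear_combination K0
    · -- wt (g1+g2) = d + 1
      have H1 : hermInner g1 g1 = 1 := by rw [A1, e1]; exact natCast_F4_one (by omega)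
      have K1 : hermInner g2 g2 = 1 := by rw [A2, e2]; exact natCast_F4_one (by omega)
      have h3c : ((w3 : ℕ) : F4) = 0 := by rw [e3]; exact natCast_F4_zero (by omega)
      have h4c : ((w4 : ℕ) : F4) = 1 := by
        rw [e4]; exact natCast_F4_one (by omega)
      have E3 : s + s ^ 2 = 0 := by linear_combination - A3 + h3c - H1 - K1 - F4.two0
      have E4 : ω4 ^ 2 * s + ω4 * s ^ 2 = 1 := by
        linear_combination - A4 + h4c - H1 - K1 - F4.two0
      have hs1 : s = 1 := solve_s1 E3 E4
      refine not_lcd_witness hspan 1 1 (by simpa using hc3ne) ?_ ?_ hlcd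
      · rw [hswap]
        linear_combination H1 + (s + 1) * hs1 + F4.two0
      · linear_combination hs1 + K1 + F4.two0
    · -- wt (g1+ω•g2) = d + 1
      have H1 : hermInner g1 g1 = 1 := by rw [A1, e1]; exact natCast_F4_one (by omega)
      have K1 : hermInner g2 g2 = 1 := by rw [A2, e2]; exact natCast_F4_one (by omega)
      have h3c : ((w3 : ℕ) : F4) = 1 := by rw [e3]; exact natCast_F4_one (by omega)
      have h4c : ((w4 : ℕ) : F4) = 0 := by
        rw [e4]; exact natCast_F4_zero (by omega)
      have E3 : s + s ^ 2 = 1 := by linear_combination - A3 + h3c - H1 - K1 - F4.two0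
      have E4 : ω4 ^ 2 * s + ω4 * s ^ 2 = 0 := by
        linear_combination - A4 + h4c - H1 - K1 - F4.two0
      have hsw : s = ω4 := solve_sw E3 E4
      refine not_lcd_witness hspan 1 ω4 (by simpa using hc4ne) ?_ ?_ hlcd
      · rw [hswap]
        linear_combination H1 + ω4 * (s + ω4) * hsw + ω4_cube + F4.two0
      · linear_combination hsw + ω4 * K1 + ω4 * F4.two0
    · -- wt (g1+ω²•g2) = d + 1
      have H1 : hermInner g1 g1 = 1 := by rw [A1, e1]; exact natCast_F4_one (by omega)
      have K1 : hermInner g2 g2 = 1 := by rw [A2, e2]; exact natCast_F4_one (by omega)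
      have h3c : ((w3 : ℕ) : F4) = 1 := by rw [e3]; exact natCast_F4_one (by omega)
      have h4c : ((w4 : ℕ) : F4) = 1 := by
        rw [e4]; exact natCast_F4_one (by omega)
      have E3 : s + s ^ 2 = 1 := by linear_combination - A3 + h3c - H1 - K1 - F4.two0
      have E4 : ω4 ^ 2 * s + ω4 * s ^ 2 = 1 := by
        linear_combination - A4 + h4c - H1 - K1 - F4.two0
      have hsw : s = ω4 ^ 2 := solve_sw2 E3 E4
      refine not_lcd_witness hspan 1 (ω4 ^ 2) (by simpa using hc5ne) ?_ ?_ hlcd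
      · rw [hswap]
        linear_combination H1 + ω4 ^ 2 * (s + ω4 ^ 2) * hsw + (ω4 ^ 3 + 1) * ω4_cube + F4.two0
      · linear_combination hsw + ω4 ^ 2 * K1 + ω4 ^ 2 * F4.two0
  · -- n % 5 = 1 : impossible
    exfalso
    rw [optimalDist, if_pos (Or.inl h)] at hd
    have hdn : 5 * d + 4 = 4 * n ∧ d % 2 = 0 := by omega
    obtain ⟨hdn5, hdev⟩ := hdn
    have hall : w1 = d ∧ w2 = d ∧ w3 = d ∧ w4 = d := by omega
    obtain ⟨e1, e2, e3, e4⟩ := hall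
    have H0 : hermInner g1 g1 = 0 := by rw [A1, e1]; exact natCast_F4_zero (by omega)
    have K0 : hermInner g2 g2 = 0 := by rw [A2, e2]; exact natCast_F4_zero (by omega)
    have h3c : ((w3 : ℕ) : F4) = 0 := by rw [e3]; exact natCast_F4_zero (by omega)
    have h4c : ((w4 : ℕ) : F4) = 0 := by
      rw [e4]; exact natCast_F4_zero (by omega)
    have E3 : s + s ^ 2 = 0 := by linear_combination - A3 + h3c - H0 - K0
    have E4 : ω4 ^ 2 * s + ω4 * s ^ 2 = 0 := by linear_combination - A4 + h4c - H0 - K0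
    have hs0 : s = 0 := solve_s0 E3 E4
    exact not_lcd_witness hspan 1 0 (by simpa using hg1ne)
      (by linear_combination H0) (by linear_combination hs0) hlcd
  · -- n % 5 = 2 : impossible
    exfalso
    rw [optimalDist, if_pos (Or.inr (Or.inl h))] at hd
    have hdn : 5 * d + 2 = 4 * n := by omega
    omega
  · -- n % 5 = 3 : impossible
    exfalso
    rw [optimalDist, if_pos (Or.inr (Or.inr h))] at hd
    have hdn : 5 * d + 1 = 4 * n := by omega
    omega
  · exact h

end Gram

section Construction

/-- First generator of the optimal code for `n = 5t+4`. -/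
noncomputable def Gone (n t : ℕ) : Fin n → F4 := fun i =>
  if i.val = 0 then 0 else if i.val < t + 2 then 1 else if i.val < 2 * t + 3 then 0 else 1

/-- Second generator of the optimal code for `n = 5t+4`. -/
noncomputable def Gtwo (n t : ℕ) : Fin n → F4 := fun i =>
  if i.val < t + 2 then 0 else if i.val < 3 * t + 4 then 1
  else if i.val < 4 * t + 4 then ω4 else ω4 ^ 2

variable {n t : ℕ}

lemma Gval0 (i : Fin n) (h : i.val = 0) : Gone n t i = 0 ∧ Gtwo n t i = 0 := by
  constructor
  · simp only [Gone]; rw [if_pos h]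
  · simp only [Gtwo]; rw [if_pos (by omega)]

lemma Gval1 (i : Fin n) (h1 : 1 ≤ i.val) (h2 : i.val < t + 2) :
    Gone n t i = 1 ∧ Gtwo n t i = 0 := by
  constructor
  · simp only [Gone]; rw [if_neg (by omega), if_pos h2]
  · simp only [Gtwo]; rw [if_pos h2]

lemma Gval2 (i : Fin n) (h1 : t + 2 ≤ i.val) (h2 : i.val < 2 * t + 3) :
    Gone n t i = 0 ∧ Gtwo n t i = 1 := by
  constructor
  · simp only [Gone]; rw [if_neg (by omega), if_neg (by omega), if_pos h2]
  · simp only [Gtwo]; rw [if_neg (by omega), if_pos (by omega)]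

lemma Gval3 (i : Fin n) (h1 : 2 * t + 3 ≤ i.val) (h2 : i.val < 3 * t + 4) :
    Gone n t i = 1 ∧ Gtwo n t i = 1 := by
  constructor
  · simp only [Gone]; rw [if_neg (by omega), if_neg (by omega), if_neg (by omega)]
  · simp only [Gtwo]; rw [if_neg (by omega), if_pos h2]

lemma Gval4 (i : Fin n) (h1 : 3 * t + 4 ≤ i.val) (h2 : i.val < 4 * t + 4) :
    Gone n t i = 1 ∧ Gtwo n t i = ω4 := by
  constructor
  · simp only [Gone]; rw [if_neg (by omega), if_neg (by omega), if_neg (by omega)]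
  · simp only [Gtwo]; rw [if_neg (by omega), if_neg (by omega), if_pos h2]

lemma Gval5 (i : Fin n) (h1 : 4 * t + 4 ≤ i.val) :
    Gone n t i = 1 ∧ Gtwo n t i = ω4 ^ 2 := by
  constructor
  · simp only [Gone]; rw [if_neg (by omega), if_neg (by omega), if_neg (by omega)]
  · simp only [Gtwo]; rw [if_neg (by omega), if_neg (by omega), if_neg (by omega)]

lemma omega_ne : ω4 ≠ 0 ∧ ω4 ^ 2 ≠ 0 ∧ (1:F4) + 1 = 0 ∧ (1:F4) + ω4 = ω4 ^ 2
    ∧ (1:F4) + ω4 ^ 2 = ω4 ∧ (1:F4) + ω4 * ω4 = ω4 ∧ (1:F4) + ω4 * ω4 ^ 2 = 0 := by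
  refine ⟨ω4_ne_zero, pow_ne_zero 2 ω4_ne_zero, by linear_combination F4.two0, ?_, ?_, ?_, ?_⟩
  · linear_combination ω4_spec - ω4 ^ 2 * F4.two0
  · linear_combination ω4_spec - ω4 * F4.two0
  · linear_combination ω4_spec - ω4 * F4.two0
  · linear_combination (ω4 - 1) * ω4_spec + F4.two0

lemma region_split (i : Fin n) : i.val = 0 ∨ (1 ≤ i.val ∧ i.val < t + 2)
    ∨ (t + 2 ≤ i.val ∧ i.val < 2 * t + 3) ∨ (2 * t + 3 ≤ i.val ∧ i.val < 3 * t + 4)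
    ∨ (3 * t + 4 ≤ i.val ∧ i.val < 4 * t + 4) ∨ 4 * t + 4 ≤ i.val := by
  omega

lemma wt_Gone (hnt : n = 5 * t + 4) : wt (Gone n t) = 4 * t + 2 := by
  rw [wt_eq_of_iff (Gone n t) (fun m => (1 ≤ m ∧ m < t + 2) ∨ (2 * t + 3 ≤ m ∧ m < n)) ?_]
  · rw [range_filter_two 1 (t + 2) (2 * t + 3) n (by omega) (by omega) (by omega)]
    omega
  · intro i
    rcases region_split (t := t) i with h | ⟨h, h'⟩ | ⟨h, h'⟩ | ⟨h, h'⟩ | ⟨h, h'⟩ | h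
    · rw [(Gval0 i h).1]; simp; omega
    · rw [(Gval1 i h h').1]; simp; omega
    · rw [(Gval2 i h h').1]; simp; omega
    · rw [(Gval3 i h h').1]; simp; have := i.isLt; omega
    · rw [(Gval4 i h h').1]; simp; have := i.isLt; omega
    · rw [(Gval5 i h).1]; simp; have := i.isLt; omega

lemma wt_Gtwo (hnt : n = 5 * t + 4) : wt (Gtwo n t) = 4 * t + 2 := by
  rw [wt_eq_of_iff (Gtwo n t) (fun m => t + 2 ≤ m ∧ m < n) ?_]
  · rw [range_filter_Ico (t + 2) n (by omega)]
    omega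
  · intro i
    rcases region_split (t := t) i with h | ⟨h, h'⟩ | ⟨h, h'⟩ | ⟨h, h'⟩ | ⟨h, h'⟩ | h
    · rw [(Gval0 i h).2]; simp; omega
    · rw [(Gval1 i h h').2]; simp; omega
    · rw [(Gval2 i h h').2]; simp; have := i.isLt; omega
    · rw [(Gval3 i h h').2]; simp; have := i.isLt; omega
    · rw [(Gval4 i h h').2]; simp [ω4_ne_zero]; have := i.isLt; omega
    · rw [(Gval5 i h).2]; simp [omega_ne.2.1]; have := i.isLt; omega

lemma wt_G12 (hnt : n = 5 * t + 4) : wt (Gone n t + Gtwo n t) = 4 * t + 2 := by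
  rw [wt_eq_of_iff (Gone n t + Gtwo n t)
      (fun m => (1 ≤ m ∧ m < 2 * t + 3) ∨ (3 * t + 4 ≤ m ∧ m < n)) ?_]
  · rw [range_filter_two 1 (2 * t + 3) (3 * t + 4) n (by omega) (by omega) (by omega)]
    omega
  · intro i
    rw [Pi.add_apply]
    rcases region_split (t := t) i with h | ⟨h, h'⟩ | ⟨h, h'⟩ | ⟨h, h'⟩ | ⟨h, h'⟩ | h
    · rw [(Gval0 i h).1, (Gval0 i h).2]; simp; omega
    · rw [(Gval1 i h h').1, (Gval1 i h h').2]; simp; omega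
    · rw [(Gval2 i h h').1, (Gval2 i h h').2]; simp; have := i.isLt; omega
    · rw [(Gval3 i h h').1, (Gval3 i h h').2, omega_ne.2.2.1]; simp; omega
    · rw [(Gval4 i h h').1, (Gval4 i h h').2, omega_ne.2.2.2.1]
      simp [omega_ne.2.1]; have := i.isLt; omega
    · rw [(Gval5 i h).1, (Gval5 i h).2, omega_ne.2.2.2.2.1]
      simp [ω4_ne_zero]; have := i.isLt; omega

lemma wt_G1w2 (hnt : n = 5 * t + 4) : wt (Gone n t + ω4 • Gtwo n t) = 4 * t + 3 := by
  rw [wt_eq_of_iff (Gone n t + ω4 • Gtwo n t) (fun m => 1 ≤ m ∧ m < 4 * t + 4) ?_]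
  · rw [range_filter_Ico 1 (4 * t + 4) (by omega)]
    omega
  · intro i
    rw [Pi.add_apply, Pi.smul_apply, smul_eq_mul]
    rcases region_split (t := t) i with h | ⟨h, h'⟩ | ⟨h, h'⟩ | ⟨h, h'⟩ | ⟨h, h'⟩ | h
    · rw [(Gval0 i h).1, (Gval0 i h).2]; simp; omega
    · rw [(Gval1 i h h').1, (Gval1 i h h').2]; simp; omega
    · rw [(Gval2 i h h').1, (Gval2 i h h').2]
      simp [ω4_ne_zero]; omega
    · rw [(Gval3 i h h').1, (Gval3 i h h').2, mul_one, omega_ne.2.2.2.1]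
      simp [omega_ne.2.1]; omega
    · rw [(Gval4 i h h').1, (Gval4 i h h').2, omega_ne.2.2.2.2.2.1]
      simp [ω4_ne_zero]; omega
    · rw [(Gval5 i h).1, (Gval5 i h).2, omega_ne.2.2.2.2.2.2]
      simp; omega

end Construction

section Backward

variable {n : ℕ}

open scoped Classical in
lemma card_zeros_le (x : Fin n → F4) (lo hi : ℕ)
    (hz : ∀ i : Fin n, x i = 0 → i.val = 0 ∨ (lo ≤ i.val ∧ i.val < hi)) :
    n ≤ wt x + (1 + (hi - lo)) := by
  have h1 := wt_add_zeros x
  have h2 : (Finset.univ.filter (fun i : Fin n => x i = 0)).card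
      ≤ ((Finset.range n).filter (fun m => m = 0 ∨ (lo ≤ m ∧ m < hi))).card := by
    rw [← card_filter_fin (fun m => m = 0 ∨ (lo ≤ m ∧ m < hi))]
    apply Finset.card_le_card
    intro i hi'
    simp only [Finset.mem_filter, Finset.mem_univ, true_and] at hi' ⊢
    exact hz i hi'
  have h3 : ((Finset.range n).filter (fun m => m = 0 ∨ (lo ≤ m ∧ m < hi))).card
      ≤ 1 + (hi - lo) := by
    have hsub : (Finset.range n).filter (fun m => m = 0 ∨ (lo ≤ m ∧ m < hi))
        ⊆ insert 0 (Finset.Ico lo hi) := by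
      intro m hm
      simp only [Finset.mem_filter, Finset.mem_range] at hm
      simp only [Finset.mem_insert, Finset.mem_Ico]
      exact hm.2
    calc ((Finset.range n).filter (fun m => m = 0 ∨ (lo ≤ m ∧ m < hi))).card
        ≤ (insert 0 (Finset.Ico lo hi)).card := Finset.card_le_card hsub
      _ ≤ (Finset.Ico lo hi).card + 1 := Finset.card_insert_le _ _
      _ = 1 + (hi - lo) := by rw [Nat.card_Ico]; omega
  omega

lemma A3_lemma (g1 g2 : Fin n → F4) :
    (wt (g1 + g2) : F4) = hermInner g1 g1 + hermInner g2 g2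
      + hermInner g1 g2 + hermInner g1 g2 ^ 2 := by
  have h := hermInner_self (g1 + g2)
  have e := hermInner_expand g1 g2 1 1 1 1
  simp only [one_smul] at e
  rw [e] at h
  linear_combination - h + hermInner_swap g1 g2

lemma A4_lemma (g1 g2 : Fin n → F4) :
    (wt (g1 + ω4 • g2) : F4) = hermInner g1 g1 + hermInner g2 g2
      + ω4 ^ 2 * hermInner g1 g2 + ω4 * hermInner g1 g2 ^ 2 := by
  have h := hermInner_self (g1 + ω4 • g2)
  have e := hermInner_expand g1 g2 1 ω4 1 ω4
  simp only [one_smul] at e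
  rw [e] at h
  linear_combination - h + ω4 * hermInner_swap g1 g2 + (hermInner g2 g2) * ω4_cube

lemma backward_dir (n : ℕ) (hn : 2 ≤ n) (hmod : n % 5 = 4) :
    ∃ (C : Submodule F4 (Fin n → F4)) (d : ℕ),
        Module.finrank F4 C = 2 ∧ hasMinWeight C d ∧ IsHermLCD C ∧ d = optimalDist n ∧
        hasMinWeight (hermDual C) 1 := by
  classical
  obtain ⟨t, hnt⟩ : ∃ t, n = 5 * t + 4 := ⟨n / 5, by omega⟩
  have hmem1 : Gone n t ∈ Submodule.span F4 {Gone n t, Gtwo n t} :=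
    Submodule.subset_span (by simp)
  have hmem2 : Gtwo n t ∈ Submodule.span F4 {Gone n t, Gtwo n t} :=
    Submodule.subset_span (by simp)
  have hind : ∀ x y : F4, x • Gone n t + y • Gtwo n t = 0 → x = 0 ∧ y = 0 := by
    intro x y hxy
    have h1 := congrFun hxy ⟨1, by omega⟩
    have h2 := congrFun hxy ⟨t + 2, by omega⟩
    simp only [Pi.add_apply, Pi.smul_apply, smul_eq_mul, Pi.zero_apply] at h1 h2
    rw [(Gval1 (t := t) ⟨1, by omega⟩ (by show 1 ≤ 1; omega) (by show 1 < t + 2; omega)).1,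
      (Gval1 (t := t) ⟨1, by omega⟩ (by show 1 ≤ 1; omega) (by show 1 < t + 2; omega)).2] at h1
    rw [(Gval2 (t := t) ⟨t + 2, by omega⟩ (by show t + 2 ≤ t + 2; omega)
        (by show t + 2 < 2 * t + 3; omega)).1,
      (Gval2 (t := t) ⟨t + 2, by omega⟩ (by show t + 2 ≤ t + 2; omega)
        (by show t + 2 < 2 * t + 3; omega)).2] at h2
    constructor
    · simpa using h1
    · simpa using h2
  have hg1ne : Gone n t ≠ 0 := by
    intro hc
    exact one_ne_zero (hind 1 0 (by simp [hc])).1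
  refine ⟨Submodule.span F4 {Gone n t, Gtwo n t}, 4 * t + 2, ?_, ?_, ?_, ?_, ?_⟩
  · -- finrank = 2
    have li : LinearIndependent F4 ![Gone n t, Gtwo n t] := by
      rw [Fintype.linearIndependent_iff]
      intro g hg
      rw [Fin.sum_univ_two] at hg
      simp only [Matrix.cons_val_zero, Matrix.cons_val_one, Matrix.head_cons] at hg
      have h := hind (g 0) (g 1) hg
      intro i
      fin_cases i
      · exact h.1
      · exact h.2
    have hrange : Set.range ![Gone n t, Gtwo n t] = {Gone n t, Gtwo n t} := by
      ext v
      constructor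
      · rintro ⟨j, rfl⟩
        fin_cases j
        · exact Or.inl rfl
        · exact Or.inr rfl
      · rintro (rfl | rfl)
        · exact ⟨0, rfl⟩
        · exact ⟨1, rfl⟩
    rw [← hrange, finrank_span_eq_card li]
    simp
  · -- min weight
    constructor
    · intro x hxC hxne
      obtain ⟨a, b, rfl⟩ := Submodule.mem_span_pair.mp hxC
      have hz : ∃ lo hi, hi ≤ n ∧ hi - lo ≤ t + 1 ∧
          ∀ i : Fin n, (a • Gone n t + b • Gtwo n t) i = 0
            → i.val = 0 ∨ (lo ≤ i.val ∧ i.val < hi) := by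
        rcases eq_or_ne a 0 with rfl | ha
        · have hb : b ≠ 0 := by rintro rfl; simp at hxne
          refine ⟨1, t + 2, by omega, by omega, ?_⟩
          intro i hzi
          simp only [Pi.add_apply, Pi.smul_apply, smul_eq_mul, zero_mul, zero_add] at hzi
          rcases region_split (t := t) i with h | ⟨h, h'⟩ | ⟨h, h'⟩ | ⟨h, h'⟩ | ⟨h, h'⟩ | h
          · exact Or.inl h
          · exact Or.inr ⟨by omega, by omega⟩
          · rw [(Gval2 i h h').2, mul_one] at hzi; exact absurd hzi hb
          · rw [(Gval3 i h h').2, mul_one] at hzi; exact absurd hzi hb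
          · rw [(Gval4 i h h').2] at hzi; exact absurd hzi (mul_ne_zero hb ω4_ne_zero)
          · rw [(Gval5 i h).2] at hzi; exact absurd hzi (mul_ne_zero hb omega_ne.2.1)
        · rcases eq_or_ne b 0 with rfl | hb
          · refine ⟨t + 2, 2 * t + 3, by omega, by omega, ?_⟩
            intro i hzi
            simp only [Pi.add_apply, Pi.smul_apply, smul_eq_mul, zero_mul, add_zero] at hzi
            rcases region_split (t := t) i with h | ⟨h, h'⟩ | ⟨h, h'⟩ | ⟨h, h'⟩ | ⟨h, h'⟩ | h
            · exact Or.inl h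
            · rw [(Gval1 i h h').1, mul_one] at hzi; exact absurd hzi ha
            · exact Or.inr ⟨by omega, by omega⟩
            · rw [(Gval3 i h h').1, mul_one] at hzi; exact absurd hzi ha
            · rw [(Gval4 i h h').1, mul_one] at hzi; exact absurd hzi ha
            · rw [(Gval5 i h).1, mul_one] at hzi; exact absurd hzi ha
          · by_cases h3 : a + b = 0
            · refine ⟨2 * t + 3, 3 * t + 4, by omega, by omega, ?_⟩
              intro i hzi
              simp only [Pi.add_apply, Pi.smul_apply, smul_eq_mul] at hzi
              rcases region_split (t := t) i with h | ⟨h, h'⟩ | ⟨h, h'⟩ | ⟨h, h'⟩ | ⟨h, h'⟩ | h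
              · exact Or.inl h
              · rw [(Gval1 i h h').1, (Gval1 i h h').2, mul_one, mul_zero, add_zero] at hzi
                exact absurd hzi ha
              · rw [(Gval2 i h h').1, (Gval2 i h h').2, mul_zero, mul_one, zero_add] at hzi
                exact absurd hzi hb
              · exact Or.inr ⟨by omega, by omega⟩
              · rw [(Gval4 i h h').1, (Gval4 i h h').2, mul_one] at hzi
                have hbz : b * (ω4 - 1) = 0 := by linear_combination hzi - h3
                rcases mul_eq_zero.mp hbz with hc | hc
                · exact absurd hc hb
                · exact absurd (by linear_combination hc : ω4 = 1) ω4_ne_one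
              · rw [(Gval5 i h).1, (Gval5 i h).2, mul_one] at hzi
                have hbz : b * (ω4 ^ 2 - 1) = 0 := by linear_combination hzi - h3
                rcases mul_eq_zero.mp hbz with hc | hc
                · exact absurd hc hb
                · exact absurd (by linear_combination ω4_spec - hc - F4.two0 : ω4 = 0)
                    ω4_ne_zero
            · by_cases h4 : a + b * ω4 = 0
              · refine ⟨3 * t + 4, 4 * t + 4, by omega, by omega, ?_⟩
                intro i hzi
                simp only [Pi.add_apply, Pi.smul_apply, smul_eq_mul] at hzi
                rcases region_split (t := t) i with h | ⟨h, h'⟩ | ⟨h, h'⟩ | ⟨h, h'⟩ | ⟨h, h'⟩ | h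
                · exact Or.inl h
                · rw [(Gval1 i h h').1, (Gval1 i h h').2, mul_one, mul_zero, add_zero] at hzi
                  exact absurd hzi ha
                · rw [(Gval2 i h h').1, (Gval2 i h h').2, mul_zero, mul_one, zero_add] at hzi
                  exact absurd hzi hb
                · rw [(Gval3 i h h').1, (Gval3 i h h').2, mul_one, mul_one] at hzi
                  exact absurd hzi h3
                · exact Or.inr ⟨by omega, by omega⟩
                · rw [(Gval5 i h).1, (Gval5 i h).2, mul_one] at hzi
                  have hbz : b * (ω4 ^ 2 - ω4) = 0 := by linear_combination hzi - h4
                  rcases mul_eq_zero.mp hbz with hc | hc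
                  · exact absurd hc hb
                  · have hq : ω4 * (ω4 - 1) = 0 := by linear_combination hc
                    rcases mul_eq_zero.mp hq with hd | hd
                    · exact absurd hd ω4_ne_zero
                    · exact absurd (by linear_combination hd : ω4 = 1) ω4_ne_one
              · by_cases h5 : a + b * ω4 ^ 2 = 0
                · refine ⟨4 * t + 4, n, by omega, by omega, ?_⟩
                  intro i hzi
                  simp only [Pi.add_apply, Pi.smul_apply, smul_eq_mul] at hzi
                  rcases region_split (t := t) i with h | ⟨h, h'⟩ | ⟨h, h'⟩ | ⟨h, h'⟩ | ⟨h, h'⟩ | h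
                  · exact Or.inl h
                  · rw [(Gval1 i h h').1, (Gval1 i h h').2, mul_one, mul_zero, add_zero] at hzi
                    exact absurd hzi ha
                  · rw [(Gval2 i h h').1, (Gval2 i h h').2, mul_zero, mul_one, zero_add] at hzi
                    exact absurd hzi hb
                  · rw [(Gval3 i h h').1, (Gval3 i h h').2, mul_one, mul_one] at hzi
                    exact absurd hzi h3
                  · rw [(Gval4 i h h').1, (Gval4 i h h').2, mul_one] at hzi
                    exact absurd hzi h4
                  · exact Or.inr ⟨h, i.isLt⟩
                · refine ⟨0, 0, by omega, by omega, ?_⟩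
                  intro i hzi
                  simp only [Pi.add_apply, Pi.smul_apply, smul_eq_mul] at hzi
                  rcases region_split (t := t) i with h | ⟨h, h'⟩ | ⟨h, h'⟩ | ⟨h, h'⟩ | ⟨h, h'⟩ | h
                  · exact Or.inl h
                  · rw [(Gval1 i h h').1, (Gval1 i h h').2, mul_one, mul_zero, add_zero] at hzi
                    exact absurd hzi ha
                  · rw [(Gval2 i h h').1, (Gval2 i h h').2, mul_zero, mul_one, zero_add] at hzi
                    exact absurd hzi hb
                  · rw [(Gval3 i h h').1, (Gval3 i h h').2, mul_one, mul_one] at hzi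
                    exact absurd hzi h3
                  · rw [(Gval4 i h h').1, (Gval4 i h h').2, mul_one] at hzi
                    exact absurd hzi h4
                  · rw [(Gval5 i h).1, (Gval5 i h).2, mul_one] at hzi
                    exact absurd hzi h5
      obtain ⟨lo, hi, hhi, hlh, hzz⟩ := hz
      have hb := card_zeros_le _ lo hi hzz
      omega
    · exact ⟨Gone n t, hmem1, hg1ne, wt_Gone hnt⟩
  · -- LCD
    have hH : hermInner (Gone n t) (Gone n t) = 0 := by
      rw [hermInner_self, wt_Gone hnt]
      exact natCast_F4_zero (by omega)
    have hK : hermInner (Gtwo n t) (Gtwo n t) = 0 := by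
      rw [hermInner_self, wt_Gtwo hnt]
      exact natCast_F4_zero (by omega)
    have h3c : ((wt (Gone n t + Gtwo n t) : ℕ) : F4) = 0 := by
      rw [wt_G12 hnt]
      exact natCast_F4_zero (by omega)
    have h4c : ((wt (Gone n t + ω4 • Gtwo n t) : ℕ) : F4) = 1 := by
      rw [wt_G1w2 hnt]
      exact natCast_F4_one (by omega)
    have E3 : hermInner (Gone n t) (Gtwo n t) + hermInner (Gone n t) (Gtwo n t) ^ 2 = 0 := by
      linear_combination - A3_lemma (Gone n t) (Gtwo n t) + h3c - hH - hK
    have E4 : ω4 ^ 2 * hermInner (Gone n t) (Gtwo n t)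
        + ω4 * hermInner (Gone n t) (Gtwo n t) ^ 2 = 1 := by
      linear_combination - A4_lemma (Gone n t) (Gtwo n t) + h4c - hH - hK
    have hs1 : hermInner (Gone n t) (Gtwo n t) = 1 := solve_s1 E3 E4
    rw [IsHermLCD, eq_bot_iff]
    intro x hx
    obtain ⟨hxC, hxD⟩ := Submodule.mem_inf.mp hx
    obtain ⟨a, b, rfl⟩ := Submodule.mem_span_pair.mp hxC
    have hb0 : b = 0 := by
      have hq := hxD (Gone n t) hmem1
      rw [hermInner_add_left, hermInner_smul_left, hermInner_smul_left, hH,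
        hermInner_swap (Gone n t) (Gtwo n t), hs1] at hq
      simpa using hq
    have ha0 : a = 0 := by
      have hq := hxD (Gtwo n t) hmem2
      rw [hermInner_add_left, hermInner_smul_left, hermInner_smul_left, hK, hs1] at hq
      simpa using hq
    rw [Submodule.mem_bot]
    rw [ha0, hb0]
    simp
  · -- optimal distance
    rw [optimalDist, if_neg (by omega)]
    omega
  · -- dual minimum weight 1
    constructor
    · exact fun x _ hx => wt_pos hx
    · refine ⟨(fun i : Fin n => if i.val = 0 then 1 else 0), ?_, ?_, ?_⟩
      · intro y hy
        obtain ⟨a, b, rfl⟩ := Submodule.mem_span_pair.mp hy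
        have hterm : ∀ j : Fin n, j ∈ Finset.univ → j ≠ (⟨0, by omega⟩ : Fin n) →
            (if j.val = 0 then (1:F4) else 0) * ((a • Gone n t + b • Gtwo n t) j) ^ 2 = 0 := by
          intro j _ hj
          rw [if_neg (fun hc => hj (Fin.ext hc)), zero_mul]
        have h0 : (a • Gone n t + b • Gtwo n t) (⟨0, by omega⟩ : Fin n) = 0 := by
          simp only [Pi.add_apply, Pi.smul_apply, smul_eq_mul]
          rw [(Gval0 (t := t) ⟨0, by omega⟩ rfl).1, (Gval0 (t := t) ⟨0, by omega⟩ rfl).2]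
          ring
        rw [hermInner, Finset.sum_eq_single (⟨0, by omega⟩ : Fin n) hterm
          (fun hmem => absurd (Finset.mem_univ _) hmem), h0]
        simp
      · intro hc
        have := congrFun hc (⟨0, by omega⟩ : Fin n)
        simp at this
      · rw [wt_eq_of_iff _ (fun m => m = 0) ?_]
        · rw [show (Finset.range n).filter (fun m => m = 0) = {0} from by
            ext m
            simp only [Finset.mem_filter, Finset.mem_range, Finset.mem_singleton]
            omega]
          simp
        · intro i
          by_cases h : i.val = 0 <;> simp [h]

end Backward

/-- for `n ≥ 2`, there exists an optimal Hermitian LCD `[n, 2]` code whose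
Hermitian dual has minimum weight `1` iff `n ≡ 4 (mod 5)`. -/
theorem stmt14 (n : ℕ) (hn : 2 ≤ n) :
    (∃ (C : Submodule F4 (Fin n → F4)) (d : ℕ),
        Module.finrank F4 C = 2 ∧ hasMinWeight C d ∧ IsHermLCD C ∧ d = optimalDist n ∧
        hasMinWeight (hermDual C) 1) ↔ n % 5 = 4 := by
  constructor
  · rintro ⟨C, d, h1, h2, h3, h4, h5⟩
    exact forward_dir n hn C d h1 h2 h3 h4 h5
  · intro h
    obtain ⟨C, d, a, b, c, dd, e⟩ := backward_dir n hn h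
    exact ⟨C, d, a, b, c, dd, e⟩
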